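/- arXiv:1010.2098 — 4 statements merged into one kernel-verified Lean document; each statement's English description precedes it below -/
import Mathlib

section
/- For a (pseudo-Riemannian) metric g defined on a star-shaped neighbourhood of the origin in ℝⁿ, the condition g_{αβ}(x) x^β = g_{αβ}(0) x^β for all x is equivalent to the condition ∂_β g_{γα}(x) x^α x^β = 0 for all x. -/
open Finset

/-- For a smooth symmetric metric `g` on a star-shaped open neighbourhood `U` of `0` in ℝⁿ,
the condition `∂_β g_{γα}(x) x^α x^β = 0` on `U` is equivalent to
`g_{αβ}(x) x^β = g_{αβ}(0) x^β` on `U`. -/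
theorem stmt4 (n : ℕ) (U : Set (Fin n → ℝ)) (hUopen : IsOpen U) (h0 : (0 : Fin n → ℝ) ∈ U)
    (hstar : ∀ x ∈ U, ∀ s : ℝ, s ∈ Set.Icc (0:ℝ) 1 → s • x ∈ U)
    (g : (Fin n → ℝ) → Fin n → Fin n → ℝ)
    (hg : ∀ μ ν, ContDiffOn ℝ (⊤ : ℕ∞) (fun x => g x μ ν) U)
    (hsym : ∀ x μ ν, g x μ ν = g x ν μ) :
    (∀ x ∈ U, ∀ γ, ∑ α, (fderiv ℝ (fun y => g y γ α) x) x * x α = 0) ↔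
    (∀ x ∈ U, ∀ α, ∑ β, g x α β * x β = ∑ β, g 0 α β * x β) := by
  have hdiff : ∀ μ ν, ∀ y ∈ U, DifferentiableAt ℝ (fun z => g z μ ν) y := by
    intro μ ν y hy
    exact ((hg μ ν).differentiableOn (by simp)).differentiableAt (hUopen.mem_nhds hy)
  constructor
  · -- (3) → (4)
    intro h3 x hx α
    set φ : ℝ → ℝ := fun s => ∑ β, g (s • x) α β * x β with hφ
    -- derivative of φ is zero on (0,1]
    have hder : ∀ s ∈ Set.Ioc (0:ℝ) 1, HasDerivAt φ 0 s := by
      intro s hs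
      have hyU : s • x ∈ U := hstar x hx s ⟨hs.1.le, hs.2⟩
      have hline : HasDerivAt (fun t : ℝ => t • x) x s := by
        simpa using (hasDerivAt_id s).smul_const x
      have hterm : ∀ β : Fin n, HasDerivAt (fun t : ℝ => g (t • x) α β * x β)
          ((fderiv ℝ (fun y => g y α β) (s • x)) x * x β) s := by
        intro β
        exact (((hdiff α β _ hyU).hasFDerivAt.comp_hasDerivAt s hline).mul_const (x β))
      have hsum : HasDerivAt φ (∑ β, (fderiv ℝ (fun y => g y α β) (s • x)) x * x β) s :=
        HasDerivAt.fun_sum fun β _ => hterm β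
      have h0' := h3 (s • x) hyU α
      have hrw : ∀ β : Fin n,
          (fderiv ℝ (fun y => g y α β) (s • x)) (s • x) * (s • x) β
            = s * s * ((fderiv ℝ (fun y => g y α β) (s • x)) x * x β) := by
        intro β
        have : (fderiv ℝ (fun y => g y α β) (s • x)) (s • x)
            = s * (fderiv ℝ (fun y => g y α β) (s • x)) x := by
          simp [map_smul]
        rw [this]; simp [Pi.smul_apply]; ring
      rw [Finset.sum_congr rfl (fun β _ => hrw β), ← Finset.mul_sum] at h0'
      have hzero : (∑ β, (fderiv ℝ (fun y => g y α β) (s • x)) x * x β) = 0 := by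
        have hs0 : s * s ≠ 0 := mul_ne_zero hs.1.ne' hs.1.ne'
        exact (mul_eq_zero.mp h0').resolve_left hs0
      rw [hzero] at hsum
      exact hsum
    -- φ is continuous on [0,1]
    have hmaps : Set.MapsTo (fun t : ℝ => t • x) (Set.Icc (0:ℝ) 1) U := fun t ht =>
      hstar x hx t ht
    have hcont : ContinuousOn φ (Set.Icc (0:ℝ) 1) := by
      apply continuousOn_finset_sum
      intro β _
      exact (((hg α β).continuousOn.comp (by fun_prop) hmaps).mul continuousOn_const)
    -- φ is constant on (0,1]
    have hconst : ∀ t ∈ Set.Ioc (0:ℝ) 1, φ 1 = φ t := by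
      intro t ht
      have := constant_of_has_deriv_right_zero
        (f := φ) (a := t) (b := 1)
        (hcont.mono (Set.Icc_subset_Icc ht.1.le le_rfl))
        (fun s hs => ((hder s ⟨lt_of_lt_of_le ht.1 hs.1, hs.2.le⟩).hasDerivWithinAt))
      exact (this 1 ⟨ht.2, le_rfl⟩).symm ▸ (this 1 ⟨ht.2, le_rfl⟩)
    -- take the limit t → 0⁺
    haveI hNeBot : (nhdsWithin (0:ℝ) (Set.Ioc 0 1)).NeBot :=
      left_nhdsWithin_Ioc_neBot (by norm_num)
    have htends : Filter.Tendsto φ (nhdsWithin (0:ℝ) (Set.Ioc 0 1)) (nhds (φ 0)) := by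
      have := (hcont 0 ⟨le_rfl, by norm_num⟩).tendsto
      exact this.mono_left (nhdsWithin_mono _ Set.Ioc_subset_Icc_self)
    have htends' : Filter.Tendsto φ (nhdsWithin (0:ℝ) (Set.Ioc 0 1)) (nhds (φ 1)) := by
      have heq : ∀ t ∈ Set.Ioc (0:ℝ) 1, φ t = φ 1 := fun t ht => (hconst t ht).symm
      exact Filter.Tendsto.congr'
        (Filter.eventually_iff_exists_mem.mpr ⟨Set.Ioc 0 1, self_mem_nhdsWithin,
          fun t ht => (heq t ht).symm⟩) tendsto_const_nhds
    have hfin : φ 1 = φ 0 := tendsto_nhds_unique htends' htends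
    simpa [hφ] using hfin
  · -- (4) → (3)
    intro h4 x hx γ
    set D : Fin n → ((Fin n → ℝ) →L[ℝ] ℝ) := fun β => fderiv ℝ (fun y => g y γ β) x with hD
    set P : Fin n → ((Fin n → ℝ) →L[ℝ] ℝ) := fun β =>
      ContinuousLinearMap.proj (R := ℝ) (φ := fun _ : Fin n => ℝ) β with hP
    have hPapp : ∀ β (y : Fin n → ℝ), P β y = y β := fun β y => rfl
    have hA : HasFDerivAt (fun y => ∑ β, g y γ β * y β)
        (∑ β, ((g x γ β) • P β + (x β) • D β)) x := by
      apply HasFDerivAt.fun_sum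
      intro β _
      exact (hdiff γ β x hx).hasFDerivAt.mul ((P β).hasFDerivAt)
    have hB : HasFDerivAt (fun y => ∑ β, g 0 γ β * y β)
        (∑ β, (g 0 γ β) • P β) x := by
      apply HasFDerivAt.fun_sum
      intro β _
      exact ((P β).hasFDerivAt).const_mul (g 0 γ β)
    have heqfun : (fun y => ∑ β, g y γ β * y β) =ᶠ[nhds x] (fun y => ∑ β, g 0 γ β * y β) :=
      Filter.eventuallyEq_of_mem (hUopen.mem_nhds hx) (fun y hy => h4 y hy γ)
    have hAB : (∑ β, ((g x γ β) • P β + (x β) • D β)) = (∑ β, (g 0 γ β) • P β) := by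
      rw [← hA.fderiv, ← hB.fderiv]
      exact heqfun.fderiv_eq
    have happ := congrArg (fun (L : (Fin n → ℝ) →L[ℝ] ℝ) => L x) hAB
    simp only [ContinuousLinearMap.sum_apply, ContinuousLinearMap.add_apply,
      ContinuousLinearMap.smul_apply, hPapp, smul_eq_mul] at happ
    have h4x := h4 x hx γ
    have hsplit : ∑ β, (g x γ β * x β + x β * (D β) x)
        = ∑ β, g x γ β * x β + ∑ β, x β * (D β) x := Finset.sum_add_distrib
    rw [hsplit] at happ
    have : ∑ β, x β * (D β) x = 0 := by linarith
    calc ∑ α, (fderiv ℝ (fun y => g y γ α) x) x * x α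
        = ∑ β, x β * (D β) x := by
          apply Finset.sum_congr rfl; intro β _; rw [mul_comm]
      _ = 0 := this
end

section
/- If a smooth metric g on a star-shaped neighbourhood of 0 in ℝⁿ satisfies Γ^μ_{αβ}(x) x^α x^β = 0 for all x (where Γ are the Christoffel symbols of g), then g_{αβ}(x) x^β = g_{αβ}(0) x^β for all x. -/
open Finset

/-- Partial derivative in the `i`-th coordinate direction. -/
noncomputable def pderiv1 {n : ℕ} (f : (Fin n → ℝ) → ℝ) (i : Fin n) (x : Fin n → ℝ) : ℝ :=
  fderiv ℝ f x (Pi.single i 1)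

/-- Christoffel symbols `Γ^μ_{αβ} = ½ g^{μσ}(∂_α g_{σβ} + ∂_β g_{σα} − ∂_σ g_{αβ})`. -/
noncomputable def christoffel {n : ℕ} (g ginv : (Fin n → ℝ) → Fin n → Fin n → ℝ)
    (x : Fin n → ℝ) (μ α β : Fin n) : ℝ :=
  (1/2) * ∑ σ, ginv x μ σ *
    (pderiv1 (fun y => g y σ β) α x + pderiv1 (fun y => g y σ α) β x
      - pderiv1 (fun y => g y α β) σ x)

/-- Partial derivative of the `(σ,ν)` component of `g` in direction `lam`. -/
noncomputable def Dg {n : ℕ} (g : (Fin n → ℝ) → Fin n → Fin n → ℝ)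
    (y : Fin n → ℝ) (σ ν lam : Fin n) : ℝ :=
  pderiv1 (fun z => g z σ ν) lam y

lemma christoffel_eq {n : ℕ} (g ginv : (Fin n → ℝ) → Fin n → Fin n → ℝ)
    (x : Fin n → ℝ) (μ α β : Fin n) :
    christoffel g ginv x μ α β
      = (1/2) * ∑ σ, ginv x μ σ * (Dg g x σ β α + Dg g x σ α β - Dg g x α β σ) := rfl

lemma Dg_fderiv {n : ℕ} (g : (Fin n → ℝ) → Fin n → Fin n → ℝ)
    (y : Fin n → ℝ) (σ ν lam : Fin n) :
    Dg g y σ ν lam = fderiv ℝ (fun z => g z σ ν) y (Pi.single lam 1) := rfl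

/-- A function on `[0,1]` continuous there and with vanishing derivative on the open
interior has equal values at the endpoints. -/
lemma aux_const (f : ℝ → ℝ) (hc : ContinuousOn f (Set.Icc 0 1))
    (hd : ∀ s ∈ Set.Ioo (0:ℝ) 1, HasDerivAt f 0 s) : f 1 = f 0 := by
  have hstep : ∀ t ∈ Set.Ioc (0:ℝ) 1, f t = f 1 := by
    intro t ht
    have h := constant_of_has_deriv_right_zero (f := f) (a := t) (b := 1)
      (hc.mono (Set.Icc_subset_Icc ht.1.le le_rfl))
      (fun s hs => (hd s ⟨lt_of_lt_of_le ht.1 hs.1, hs.2⟩).hasDerivWithinAt)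
    exact (h 1 ⟨ht.2, le_rfl⟩).symm
  have hne : (nhdsWithin (0:ℝ) (Set.Ioc 0 1)).NeBot := by
    refine mem_closure_iff_nhdsWithin_neBot.1 ?_
    rw [closure_Ioc (zero_ne_one)]
    exact ⟨le_rfl, zero_le_one⟩
  have h1 : Filter.Tendsto f (nhdsWithin 0 (Set.Ioc 0 1)) (nhds (f 0)) :=
    ((hc 0 (Set.left_mem_Icc.2 zero_le_one)).mono Set.Ioc_subset_Icc_self)
  have h2 : Filter.Tendsto f (nhdsWithin 0 (Set.Ioc 0 1)) (nhds (f 1)) := by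
    refine Filter.Tendsto.congr' ?_ tendsto_const_nhds
    filter_upwards [self_mem_nhdsWithin] with t ht using (hstep t ht).symm
  exact tendsto_nhds_unique h2 h1

lemma sum3_rot {M : Type*} [AddCommMonoid M] {n : ℕ} (F : Fin n → Fin n → Fin n → M) :
    ∑ a, ∑ b, ∑ c, F a b c = ∑ c, ∑ a, ∑ b, F a b c := by
  rw [show (∑ a, ∑ b, ∑ c, F a b c) = ∑ a, ∑ c, ∑ b, F a b c from
    Finset.sum_congr rfl fun a _ => Finset.sum_comm]
  exact Finset.sum_comm

/-- The lowered form of the Christoffel hypothesis. -/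
lemma lowered {n : ℕ} {g ginv : (Fin n → ℝ) → Fin n → Fin n → ℝ} {y : Fin n → ℝ}
    (hinv : ∀ μ ν, ∑ σ, g y μ σ * ginv y σ ν = if μ = ν then 1 else 0)
    (hΓ : ∀ μ, ∑ α, ∑ β, christoffel g ginv y μ α β * y α * y β = 0) (μ : Fin n) :
    ∑ α, ∑ β, (2 * Dg g y μ β α - Dg g y α β μ) * y α * y β = 0 := by
  have h3 : ∀ α β : Fin n, (∑ m, g y μ m * christoffel g ginv y m α β)
      = (1/2) * (Dg g y μ β α + Dg g y μ α β - Dg g y α β μ) := by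
    intro α β
    simp only [christoffel_eq]
    calc ∑ m, g y μ m * ((1/2) * ∑ σ, ginv y m σ * (Dg g y σ β α + Dg g y σ α β - Dg g y α β σ))
        = ∑ σ, (∑ m, g y μ m * ginv y m σ) *
            ((1/2) * (Dg g y σ β α + Dg g y σ α β - Dg g y α β σ)) := by
          simp only [Finset.mul_sum, Finset.sum_mul]
          rw [Finset.sum_comm]
          exact Finset.sum_congr rfl fun σ _ => Finset.sum_congr rfl fun m _ => by ring
      _ = (1/2) * (Dg g y μ β α + Dg g y μ α β - Dg g y α β μ) := by
          simp only [hinv]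
          simp [ite_mul, Finset.sum_ite_eq]
  have h2 : ∑ α, ∑ β, (∑ m, g y μ m * christoffel g ginv y m α β) * y α * y β = 0 := by
    calc ∑ α, ∑ β, (∑ m, g y μ m * christoffel g ginv y m α β) * y α * y β
        = ∑ α, ∑ β, ∑ m, g y μ m * (christoffel g ginv y m α β * y α * y β) := by
          simp only [Finset.sum_mul]
          exact Finset.sum_congr rfl fun α _ => Finset.sum_congr rfl fun β _ =>
            Finset.sum_congr rfl fun m _ => by ring
      _ = ∑ α, ∑ m, ∑ β, g y μ m * (christoffel g ginv y m α β * y α * y β) :=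
          Finset.sum_congr rfl fun α _ => Finset.sum_comm
      _ = ∑ m, ∑ α, ∑ β, g y μ m * (christoffel g ginv y m α β * y α * y β) := Finset.sum_comm
      _ = ∑ m, g y μ m * ∑ α, ∑ β, christoffel g ginv y m α β * y α * y β := by
          simp only [Finset.mul_sum]
      _ = 0 := by simp [hΓ]
  have h0 : ∑ α, ∑ β, (Dg g y μ β α + Dg g y μ α β - Dg g y α β μ) * y α * y β = 0 := by
    have h := h2
    simp only [h3] at h
    calc ∑ α, ∑ β, (Dg g y μ β α + Dg g y μ α β - Dg g y α β μ) * y α * y β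
        = 2 * ∑ α, ∑ β, (1/2) * (Dg g y μ β α + Dg g y μ α β - Dg g y α β μ) * y α * y β := by
          simp only [Finset.mul_sum]
          exact Finset.sum_congr rfl fun α _ => Finset.sum_congr rfl fun β _ => by ring
      _ = 0 := by rw [h]; ring
  have hswap : ∑ α, ∑ β, Dg g y μ α β * y α * y β = ∑ α, ∑ β, Dg g y μ β α * y α * y β := by
    rw [Finset.sum_comm]
    exact Finset.sum_congr rfl fun α _ => Finset.sum_congr rfl fun β _ => by ring
  have hsplit : ∀ α β : Fin n, (2 * Dg g y μ β α - Dg g y α β μ) * y α * y β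
      = (Dg g y μ β α + Dg g y μ α β - Dg g y α β μ) * y α * y β
        + (Dg g y μ β α * y α * y β - Dg g y μ α β * y α * y β) := by
    intro α β; ring
  simp only [hsplit, Finset.sum_add_distrib, Finset.sum_sub_distrib]
  rw [h0, hswap]
  ring

/-- Triple contraction of the lowered identity. -/
lemma cubic_aux {n : ℕ} (D : Fin n → Fin n → Fin n → ℝ) (y : Fin n → ℝ)
    (hLI : ∀ μ, ∑ α, ∑ β, (2 * D μ β α - D α β μ) * y α * y β = 0) :
    ∑ a, ∑ b, ∑ c, D b c a * y a * y b * y c = 0 := by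
  have h0 : ∑ a, ∑ b, ∑ c, y a * ((2 * D a c b - D b c a) * y b * y c) = 0 := by
    calc ∑ a, ∑ b, ∑ c, y a * ((2 * D a c b - D b c a) * y b * y c)
        = ∑ a, y a * ∑ b, ∑ c, (2 * D a c b - D b c a) * y b * y c := by
          simp only [Finset.mul_sum]
      _ = 0 := by simp [hLI]
  have hswap : ∑ a, ∑ b, ∑ c, D a c b * y a * y b * y c
      = ∑ a, ∑ b, ∑ c, D b c a * y a * y b * y c := by
    rw [Finset.sum_comm]
    exact Finset.sum_congr rfl fun a _ => Finset.sum_congr rfl fun b _ =>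
      Finset.sum_congr rfl fun c _ => by ring
  have hsplit : ∀ a b c : Fin n, y a * ((2 * D a c b - D b c a) * y b * y c)
      = (D a c b * y a * y b * y c + D a c b * y a * y b * y c)
        - D b c a * y a * y b * y c := by intros; ring
  simp only [hsplit, Finset.sum_add_distrib, Finset.sum_sub_distrib] at h0
  rw [hswap] at h0
  linarith [h0]

/-- If a smooth metric `g` on a star-shaped neighbourhood of `0` in ℝⁿ satisfies
`Γ^μ_{αβ}(x) x^α x^β = 0`, then `g_{αβ}(x) x^β = g_{αβ}(0) x^β`. -/
theorem stmt5 (n : ℕ) (U : Set (Fin n → ℝ)) (hUopen : IsOpen U) (h0 : (0 : Fin n → ℝ) ∈ U)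
    (hstar : ∀ x ∈ U, ∀ s : ℝ, s ∈ Set.Icc (0:ℝ) 1 → s • x ∈ U)
    (g ginv : (Fin n → ℝ) → Fin n → Fin n → ℝ)
    (hg : ∀ μ ν, ContDiffOn ℝ (⊤ : ℕ∞) (fun x => g x μ ν) U)
    (hsym : ∀ x μ ν, g x μ ν = g x ν μ)
    (hinv : ∀ x ∈ U, ∀ μ ν, ∑ σ, g x μ σ * ginv x σ ν = if μ = ν then 1 else 0)
    (hΓ : ∀ x ∈ U, ∀ μ, ∑ α, ∑ β, christoffel g ginv x μ α β * x α * x β = 0) :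
    ∀ x ∈ U, ∀ α, ∑ β, g x α β * x β = ∑ β, g 0 α β * x β := by
  classical
  -- differentiability of the metric components
  have hdiff : ∀ (μ ν : Fin n) (y : Fin n → ℝ), y ∈ U →
      DifferentiableAt ℝ (fun z => g z μ ν) y :=
    fun μ ν y hy => ((hg μ ν).differentiableOn (by simp)).differentiableAt (hUopen.mem_nhds hy)
  -- the fderiv applied to an arbitrary vector
  have happ : ∀ (μ ν : Fin n) (y : Fin n → ℝ), y ∈ U → ∀ v : Fin n → ℝ,
      fderiv ℝ (fun z => g z μ ν) y v = ∑ lam, v lam * Dg g y μ ν lam := by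
    intro μ ν y hy v
    conv_lhs => rw [show v = ∑ lam, v lam • (Pi.single lam 1 : Fin n → ℝ) by
      simp only [← Pi.single_smul, smul_eq_mul, mul_one, Finset.univ_sum_single]]
    rw [map_sum]
    simp [Dg_fderiv, smul_eq_mul, mul_comm]
  -- lowered identity
  have hLI : ∀ y ∈ U, ∀ μ : Fin n,
      ∑ α, ∑ β, (2 * Dg g y μ β α - Dg g y α β μ) * y α * y β = 0 :=
    fun y hy μ => lowered (hinv y hy) (hΓ y hy) μ
  -- cubic contraction
  have hI1 : ∀ y ∈ U, ∑ a, ∑ b, ∑ c, Dg g y b c a * y a * y b * y c = 0 :=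
    fun y hy => cubic_aux (Dg g y) y (hLI y hy)
  -- derivative of a metric component along a ray
  have hpathd : ∀ (x : Fin n → ℝ) (μ ν : Fin n) (t : ℝ), t • x ∈ U →
      HasDerivAt (fun s : ℝ => g (s • x) μ ν) (∑ lam, x lam * Dg g (t • x) μ ν lam) t := by
    intro x μ ν t hmem
    have hp : HasDerivAt (fun s : ℝ => s • x) x t := by
      simpa using (hasDerivAt_id t).smul_const x
    have h := ((hdiff μ ν _ hmem).hasFDerivAt).comp_hasDerivAt t hp
    rw [happ μ ν _ hmem x] at h
    simp only [Function.comp_def] at h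
    exact h
  -- continuity of a metric component along a ray
  have hpathc : ∀ x ∈ U, ∀ (μ ν : Fin n),
      ContinuousOn (fun t : ℝ => g (t • x) μ ν) (Set.Icc 0 1) := by
    intro x hx μ ν
    exact (hg μ ν).continuousOn.comp
      ((continuous_id.smul continuous_const).continuousOn) (fun t ht => hstar x hx t ht)
  -- the scalar invariant: g_{αβ}(y) y^α y^β = g_{αβ}(0) y^α y^β on U
  have hQconst : ∀ y ∈ U, ∑ α, ∑ β, g y α β * y α * y β
      = ∑ α, ∑ β, g 0 α β * y α * y β := by
    intro y hy
    have key := aux_const (fun t => ∑ α, ∑ β, g (t • y) α β * y α * y β)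
      (by
        refine continuousOn_finset_sum _ fun α _ => continuousOn_finset_sum _ fun β _ => ?_
        exact ((hpathc y hy α β).mul continuousOn_const).mul continuousOn_const)
      (by
        intro t ht
        have hmem : t • y ∈ U := hstar y hy t ⟨ht.1.le, ht.2.le⟩
        have hA : HasDerivAt (fun t : ℝ => ∑ α, ∑ β, g (t • y) α β * y α * y β)
            (∑ α, ∑ β, (∑ lam, y lam * Dg g (t • y) α β lam) * y α * y β) t := by
          refine HasDerivAt.fun_sum fun α _ => HasDerivAt.fun_sum fun β _ => ?_
          exact ((hpathd y α β t hmem).mul_const (y α)).mul_const (y β)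
        have hS : ∑ a, ∑ b, ∑ c, Dg g (t • y) b c a * y a * y b * y c = 0 := by
          have h := hI1 (t • y) hmem
          have hfac : ∑ a, ∑ b, ∑ c, Dg g (t • y) b c a * (t • y) a * (t • y) b * (t • y) c
              = t^3 * ∑ a, ∑ b, ∑ c, Dg g (t • y) b c a * y a * y b * y c := by
            simp only [Finset.mul_sum, Pi.smul_apply, smul_eq_mul]
            exact Finset.sum_congr rfl fun a _ => Finset.sum_congr rfl fun b _ =>
              Finset.sum_congr rfl fun c _ => by ring
          rw [hfac] at h
          have ht3 : (t:ℝ)^3 ≠ 0 := pow_ne_zero _ (ne_of_gt ht.1)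
          exact (mul_eq_zero.1 h).resolve_left ht3
        have hz : (∑ α, ∑ β, (∑ lam, y lam * Dg g (t • y) α β lam) * y α * y β) = 0 := by
          calc ∑ α, ∑ β, (∑ lam, y lam * Dg g (t • y) α β lam) * y α * y β
              = ∑ α, ∑ β, ∑ lam, Dg g (t • y) α β lam * y lam * y α * y β := by
                simp only [Finset.sum_mul]
                exact Finset.sum_congr rfl fun α _ => Finset.sum_congr rfl fun β _ =>
                  Finset.sum_congr rfl fun lam _ => by ring
            _ = ∑ lam, ∑ α, ∑ β, Dg g (t • y) α β lam * y lam * y α * y β :=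
                sum3_rot _
            _ = ∑ a, ∑ b, ∑ c, Dg g (t • y) b c a * y a * y b * y c := by
                exact Finset.sum_congr rfl fun a _ => Finset.sum_congr rfl fun b _ =>
                  Finset.sum_congr rfl fun c _ => by ring
            _ = 0 := hS
        exact hz ▸ hA)
    simpa using key
  -- key identity from differentiating the scalar invariant
  have hKEY : ∀ y ∈ U, ∀ μ : Fin n, ∑ α, ∑ β, Dg g y μ β α * y α * y β
      = ∑ β, g 0 μ β * y β - ∑ β, g y μ β * y β := by
    intro y hy μ
    have hproj : ∀ i : Fin n, HasFDerivAt (fun z : Fin n → ℝ => z i)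
        (ContinuousLinearMap.proj i : (Fin n → ℝ) →L[ℝ] ℝ) y :=
      fun i => hasFDerivAt_apply i y
    have hQd : HasFDerivAt (fun z => ∑ α, ∑ β, g z α β * z α * z β)
        (∑ α, ∑ β, ((g y α β * y α) • (ContinuousLinearMap.proj β : (Fin n → ℝ) →L[ℝ] ℝ)
          + y β • (g y α β • (ContinuousLinearMap.proj α : (Fin n → ℝ) →L[ℝ] ℝ)
            + y α • fderiv ℝ (fun z => g z α β) y))) y := by
      refine HasFDerivAt.fun_sum fun α _ => HasFDerivAt.fun_sum fun β _ => ?_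
      exact (((hdiff α β y hy).hasFDerivAt.mul (hproj α)).mul (hproj β))
    have hQ0d : HasFDerivAt (fun z : Fin n → ℝ => ∑ α, ∑ β, g 0 α β * z α * z β)
        (∑ α, ∑ β, ((g 0 α β * y α) • (ContinuousLinearMap.proj β : (Fin n → ℝ) →L[ℝ] ℝ)
          + y β • (g 0 α β • (ContinuousLinearMap.proj α : (Fin n → ℝ) →L[ℝ] ℝ)
            + y α • (0 : (Fin n → ℝ) →L[ℝ] ℝ)))) y := by
      refine HasFDerivAt.fun_sum fun α _ => HasFDerivAt.fun_sum fun β _ => ?_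
      exact (((hasFDerivAt_const (g 0 α β) y).mul (hproj α)).mul (hproj β))
    have heq : fderiv ℝ (fun z => ∑ α, ∑ β, g z α β * z α * z β) y
        = fderiv ℝ (fun z : Fin n → ℝ => ∑ α, ∑ β, g 0 α β * z α * z β) y := by
      apply Filter.EventuallyEq.fderiv_eq
      filter_upwards [hUopen.mem_nhds hy] with z hz using hQconst z hz
    have happly :
        (∑ α, ∑ β, ((g y α β * y α) • (ContinuousLinearMap.proj β : (Fin n → ℝ) →L[ℝ] ℝ)
          + y β • (g y α β • (ContinuousLinearMap.proj α : (Fin n → ℝ) →L[ℝ] ℝ)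
            + y α • fderiv ℝ (fun z => g z α β) y))) (Pi.single μ 1)
        = (∑ α, ∑ β, ((g 0 α β * y α) • (ContinuousLinearMap.proj β : (Fin n → ℝ) →L[ℝ] ℝ)
          + y β • (g 0 α β • (ContinuousLinearMap.proj α : (Fin n → ℝ) →L[ℝ] ℝ)
            + y α • (0 : (Fin n → ℝ) →L[ℝ] ℝ)))) (Pi.single μ 1) := by
      rw [← hQd.fderiv, ← hQ0d.fderiv, heq]
    simp only [ContinuousLinearMap.sum_apply, ContinuousLinearMap.add_apply,
      ContinuousLinearMap.smul_apply, ContinuousLinearMap.proj_apply,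
      ContinuousLinearMap.zero_apply, smul_eq_mul, ← Dg_fderiv, Pi.single_apply,
      mul_ite, mul_one, mul_zero, ite_mul, zero_mul, one_mul, mul_add,
      Finset.sum_add_distrib, Finset.sum_ite_eq', Finset.mem_univ, if_true,
      Finset.sum_const_zero, add_zero] at happly
    have hdelta : ∀ h : Fin n → Fin n → ℝ,
        (∑ a, ∑ b, if a = μ then h a b else 0) = ∑ b, h μ b := by
      intro h
      rw [Finset.sum_comm]
      simp
    simp only [hdelta] at happly
    have e1 : ∑ x, g y x μ * y x = ∑ x, g y μ x * y x :=
      Finset.sum_congr rfl fun x _ => by rw [hsym]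
    have e2 : ∑ x, g 0 x μ * y x = ∑ x, g 0 μ x * y x :=
      Finset.sum_congr rfl fun x _ => by rw [hsym]
    have e3 : (∑ b, y b * g y μ b) = ∑ x, g y μ x * y x :=
      Finset.sum_congr rfl fun b _ => by ring
    have e4 : (∑ b, y b * g 0 μ b) = ∑ x, g 0 μ x * y x :=
      Finset.sum_congr rfl fun b _ => by ring
    have e5 : (∑ x, ∑ x1, y x1 * (y x * Dg g y x x1 μ))
        = ∑ α, ∑ β, Dg g y α β μ * y α * y β :=
      Finset.sum_congr rfl fun x _ => Finset.sum_congr rfl fun x1 _ => by ring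
    rw [e1, e2, e3, e4, e5] at happly
    have hLIy := hLI y hy μ
    have hsplitLI : ∑ α, ∑ β, (2 * Dg g y μ β α - Dg g y α β μ) * y α * y β
        = 2 * (∑ α, ∑ β, Dg g y μ β α * y α * y β)
          - ∑ α, ∑ β, Dg g y α β μ * y α * y β := by
      simp only [Finset.mul_sum, ← Finset.sum_sub_distrib]
      exact Finset.sum_congr rfl fun α _ => Finset.sum_congr rfl fun β _ => by ring
    rw [hsplitLI] at hLIy
    have hμβ : (∑ β, g 0 μ β * y β) = ∑ x, g 0 μ x * y x := rfl
    have hμβ2 : (∑ β, g y μ β * y β) = ∑ x, g y μ x * y x := rfl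
    rw [hμβ, hμβ2]
    linarith [happly, hLIy]
  -- final step: A(s) := Σ_β g(s•x)_{μβ} x^β satisfies s·A' = c − A, hence s·A − s·c ≡ 0
  intro x hx μ
  have key := aux_const
    (fun s => s * (∑ β, g (s • x) μ β * x β) - s * ∑ β, g 0 μ β * x β)
    (by
      apply ContinuousOn.sub
      · exact continuousOn_id.mul (continuousOn_finset_sum _ fun β _ =>
          (hpathc x hx μ β).mul continuousOn_const)
      · exact continuousOn_id.mul continuousOn_const)
    (by
      intro s hs
      have hs0 : s ≠ 0 := ne_of_gt hs.1
      have hmem : s • x ∈ U := hstar x hx s ⟨hs.1.le, hs.2.le⟩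
      have hA : HasDerivAt (fun t : ℝ => ∑ β, g (t • x) μ β * x β)
          (∑ β, (∑ lam, x lam * Dg g (s • x) μ β lam) * x β) s :=
        HasDerivAt.fun_sum fun β _ => (hpathd x μ β s hmem).mul_const (x β)
      have hKs := hKEY (s • x) hmem μ
      have hKl : (∑ α, ∑ β, Dg g (s • x) μ β α * (s • x) α * (s • x) β)
          = s * (s * ∑ β, (∑ lam, x lam * Dg g (s • x) μ β lam) * x β) := by
        conv_lhs => rw [Finset.sum_comm]
        simp only [Finset.mul_sum, Finset.sum_mul, Pi.smul_apply, smul_eq_mul]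
        exact Finset.sum_congr rfl fun a _ => Finset.sum_congr rfl fun b _ => by ring
      have hKr : (∑ β, g 0 μ β * (s • x) β) - (∑ β, g (s • x) μ β * (s • x) β)
          = s * ((∑ β, g 0 μ β * x β) - ∑ β, g (s • x) μ β * x β) := by
        rw [← Finset.sum_sub_distrib, ← Finset.sum_sub_distrib, Finset.mul_sum]
        exact Finset.sum_congr rfl fun β _ => by
          simp only [Pi.smul_apply, smul_eq_mul]; ring
      rw [hKl, hKr] at hKs
      have hsa : s * (∑ β, (∑ lam, x lam * Dg g (s • x) μ β lam) * x β)
          = (∑ β, g 0 μ β * x β) - ∑ β, g (s • x) μ β * x β :=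
        mul_left_cancel₀ hs0 hKs
      have hder : HasDerivAt
          (fun t : ℝ => t * (∑ β, g (t • x) μ β * x β) - t * ∑ β, g 0 μ β * x β)
          ((1 * (∑ β, g (s • x) μ β * x β)
            + s * ∑ β, (∑ lam, x lam * Dg g (s • x) μ β lam) * x β)
            - 1 * ∑ β, g 0 μ β * x β) s :=
        ((hasDerivAt_id s).mul hA).sub ((hasDerivAt_id s).mul_const _)
      have hzero : (1 * (∑ β, g (s • x) μ β * x β)
            + s * ∑ β, (∑ lam, x lam * Dg g (s • x) μ β lam) * x β)
            - 1 * ∑ β, g 0 μ β * x β = 0 := by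
        rw [hsa]; ring
      exact hzero ▸ hder)
  simp only [one_mul, zero_mul, one_smul, sub_zero, sub_self] at key
  linarith [key]
end

section
/- For a smooth metric g on a star-shaped neighbourhood of 0 in ℝⁿ, if both ∂_β g_{γα}(x) x^α x^β = 0 and g_{αβ}(x) x^β = g_{αβ}(0) x^β hold for all x, then the Christoffel symbols satisfy Γ^μ_{αβ}(x) x^α x^β = 0 for all x. -/
open Finset

/-- If a smooth metric `g` on a star-shaped neighbourhood of `0` in ℝⁿ satisfies both
`∂_β g_{γα}(x) x^α x^β = 0` and `g_{αβ}(x) x^β = g_{αβ}(0) x^β`, then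
`Γ^μ_{αβ}(x) x^α x^β = 0`. -/
theorem stmt6 (n : ℕ) (U : Set (Fin n → ℝ)) (hUopen : IsOpen U) (h0 : (0 : Fin n → ℝ) ∈ U)
    (hstar : ∀ x ∈ U, ∀ s : ℝ, s ∈ Set.Icc (0:ℝ) 1 → s • x ∈ U)
    (g ginv : (Fin n → ℝ) → Fin n → Fin n → ℝ)
    (hg : ∀ μ ν, ContDiffOn ℝ (⊤ : ℕ∞) (fun x => g x μ ν) U)
    (hsym : ∀ x μ ν, g x μ ν = g x ν μ)
    (hinv : ∀ x ∈ U, ∀ μ ν, ∑ σ, g x μ σ * ginv x σ ν = if μ = ν then 1 else 0)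
    (h3 : ∀ x ∈ U, ∀ γ, ∑ α, (fderiv ℝ (fun y => g y γ α) x) x * x α = 0)
    (h4 : ∀ x ∈ U, ∀ α, ∑ β, g x α β * x β = ∑ β, g 0 α β * x β) :
    ∀ x ∈ U, ∀ μ, ∑ α, ∑ β, christoffel g ginv x μ α β * x α * x β = 0 := by
  intro x hx μ
  have hxU : U ∈ nhds x := hUopen.mem_nhds hx
  have hd : ∀ α β, DifferentiableAt ℝ (fun y => g y α β) x := fun α β =>
    ((hg α β).differentiableOn (by simp)).differentiableAt hxU
  have hsingle : (∑ i, x i • (Pi.single i (1:ℝ) : Fin n → ℝ)) = x := by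
    funext j
    simp [Finset.sum_apply, Pi.single_apply]
  have hlin : ∀ f : (Fin n → ℝ) → ℝ, ∑ α, pderiv1 f α x * x α = fderiv ℝ f x x := by
    intro f
    have hx' : (fderiv ℝ f x) x = (fderiv ℝ f x) (∑ i, x i • (Pi.single i (1:ℝ) : Fin n → ℝ)) := by
      rw [hsingle]
    rw [hx', map_sum]
    simp [pderiv1, mul_comm]
  have hA : ∀ σ, ∑ α, ∑ β, pderiv1 (fun y => g y σ β) α x * x α * x β = 0 := by
    intro σ
    rw [Finset.sum_comm]
    have e : ∀ β, ∑ α, pderiv1 (fun y => g y σ β) α x * x α * x β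
        = (∑ α, pderiv1 (fun y => g y σ β) α x * x α) * x β := by
      intro β; rw [Finset.sum_mul]
    simp only [e, hlin]
    exact h3 x hx σ
  have hB : ∀ σ, ∑ α, ∑ β, pderiv1 (fun y => g y σ α) β x * x α * x β = 0 := by
    intro σ
    have e : ∀ α, ∑ β, pderiv1 (fun y => g y σ α) β x * x α * x β
        = (∑ β, pderiv1 (fun y => g y σ α) β x * x β) * x α := by
      intro α; rw [Finset.sum_mul]; exact Finset.sum_congr rfl fun β _ => by ring
    simp only [e, hlin]
    exact h3 x hx σ
  -- h4 in subtracted form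
  have h4' : ∀ y ∈ U, ∀ α, ∑ β, (g y α β - g 0 α β) * y β = 0 := by
    intro y hy α
    simp only [sub_mul, Finset.sum_sub_distrib, h4 y hy α, sub_self]
  -- the hard part
  have hC : ∀ σ, ∑ α, ∑ β, pderiv1 (fun y => g y α β) σ x * x α * x β = 0 := by
    intro σ
    set F : (Fin n → ℝ) → ℝ := fun y => ∑ α, ∑ β, (g y α β - g 0 α β) * y α * y β with hFdef
    have hF0 : F =ᶠ[nhds x] fun _ => 0 := by
      filter_upwards [hxU] with y hy
      have : F y = ∑ α, (∑ β, (g y α β - g 0 α β) * y β) * y α := by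
        rw [hFdef]
        refine Finset.sum_congr rfl fun α _ => ?_
        rw [Finset.sum_mul]
        exact Finset.sum_congr rfl fun β _ => by ring
      simp [this, h4' y hy]
    have hproj : ∀ i : Fin n, HasFDerivAt (fun y : Fin n → ℝ => y i)
        (ContinuousLinearMap.proj (R := ℝ) (φ := fun _ : Fin n => ℝ) i) x :=
      fun i => (ContinuousLinearMap.proj (R := ℝ) (φ := fun _ : Fin n => ℝ) i).hasFDerivAt
    have hterm : ∀ α β : Fin n, HasFDerivAt (fun y => (g y α β - g 0 α β) * y α * y β)
        (((g x α β - g 0 α β) * x α) • ContinuousLinearMap.proj (R := ℝ) (φ := fun _ : Fin n => ℝ) β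
          + x β • (((g x α β - g 0 α β) • ContinuousLinearMap.proj (R := ℝ) (φ := fun _ : Fin n => ℝ) α)
            + x α • fderiv ℝ (fun y => g y α β) x)) x := by
      intro α β
      have h1 : HasFDerivAt (fun y => g y α β - g 0 α β) (fderiv ℝ (fun y => g y α β) x) x :=
        ((hd α β).hasFDerivAt).sub_const _
      exact (h1.mul (hproj α)).mul (hproj β)
    have hFtot : HasFDerivAt F
        (∑ α, ∑ β, (((g x α β - g 0 α β) * x α) • ContinuousLinearMap.proj (R := ℝ) (φ := fun _ : Fin n => ℝ) β
          + x β • (((g x α β - g 0 α β) • ContinuousLinearMap.proj (R := ℝ) (φ := fun _ : Fin n => ℝ) α)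
            + x α • fderiv ℝ (fun y => g y α β) x))) x := by
      refine HasFDerivAt.fun_sum fun α _ => ?_
      exact HasFDerivAt.fun_sum fun β _ => hterm α β
    have hDzero : fderiv ℝ F x = 0 := by
      rw [Filter.EventuallyEq.fderiv_eq hF0]
      exact fderiv_const_apply 0
    have hval := congrArg (fun L : (Fin n → ℝ) →L[ℝ] ℝ => L (Pi.single σ 1))
      (hFtot.fderiv.symm.trans hDzero)
    simp only [ContinuousLinearMap.sum_apply, ContinuousLinearMap.add_apply,
      ContinuousLinearMap.smul_apply, ContinuousLinearMap.proj_apply, smul_eq_mul,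
      Pi.single_apply, ContinuousLinearMap.zero_apply] at hval
    -- hval : ∑ α, ∑ β, (x β * ((g x α β - g 0 α β) * (if α = σ then 1 else 0)
    --        + x α * fderiv ... (single σ 1)) + (g x α β - g 0 α β) * x α * (if β = σ then 1 else 0)) = 0
    have hsplit : ∀ α β : Fin n,
        (g x α β - g 0 α β) * x α * (if β = σ then 1 else 0)
          + x β * ((g x α β - g 0 α β) * (if α = σ then (1:ℝ) else 0)
            + x α * (fderiv ℝ (fun y => g y α β) x) (Pi.single σ 1))
        = pderiv1 (fun y => g y α β) σ x * x α * x β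
          + (if α = σ then (g x α β - g 0 α β) * x β else 0)
          + (if β = σ then (g x α β - g 0 α β) * x α else 0) := by
      intro α β
      unfold pderiv1
      split <;> split <;> ring
    rw [Finset.sum_congr rfl fun α _ => Finset.sum_congr rfl fun β _ => hsplit α β] at hval
    simp only [Finset.sum_add_distrib, Finset.sum_ite_eq', Finset.mem_univ, if_true] at hval
    -- remaining extra sums vanish by h4'
    have e1 : ∑ β, (g x σ β - g 0 σ β) * x β = 0 := h4' x hx σ
    have e2 : ∑ α, (g x α σ - g 0 α σ) * x α = 0 := by
      have : ∀ α, (g x α σ - g 0 α σ) * x α = (g x σ α - g 0 σ α) * x α := by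
        intro α; rw [hsym x α σ, hsym 0 α σ]
      simp only [this]
      exact h4' x hx σ
    have emid : (∑ α, ∑ β, if α = σ then (g x α β - g 0 α β) * x β else 0)
        = ∑ β, (g x σ β - g 0 σ β) * x β := by
      rw [Finset.sum_comm]
      simp [Finset.sum_ite_eq']
    rw [emid, e1, e2] at hval
    linarith
  -- final assembly
  have efin : ∀ α β : Fin n, christoffel g ginv x μ α β * x α * x β
      = ∑ σ, ((1/2) * ginv x μ σ * (pderiv1 (fun y => g y σ β) α x * x α * x β)
          + (1/2) * ginv x μ σ * (pderiv1 (fun y => g y σ α) β x * x α * x β)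
          - (1/2) * ginv x μ σ * (pderiv1 (fun y => g y α β) σ x * x α * x β)) := by
    intro α β
    unfold christoffel
    rw [Finset.mul_sum, Finset.sum_mul, Finset.sum_mul]
    exact Finset.sum_congr rfl fun σ _ => by ring
  simp only [efin]
  have swap1 : ∀ α : Fin n, (∑ β, ∑ σ, ((1/2) * ginv x μ σ * (pderiv1 (fun y => g y σ β) α x * x α * x β)
          + (1/2) * ginv x μ σ * (pderiv1 (fun y => g y σ α) β x * x α * x β)
          - (1/2) * ginv x μ σ * (pderiv1 (fun y => g y α β) σ x * x α * x β)))
      = ∑ σ, ∑ β, ((1/2) * ginv x μ σ * (pderiv1 (fun y => g y σ β) α x * x α * x β)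
          + (1/2) * ginv x μ σ * (pderiv1 (fun y => g y σ α) β x * x α * x β)
          - (1/2) * ginv x μ σ * (pderiv1 (fun y => g y α β) σ x * x α * x β)) :=
    fun α => Finset.sum_comm
  simp only [swap1]
  rw [Finset.sum_comm]
  refine Finset.sum_eq_zero fun σ _ => ?_
  simp only [Finset.sum_add_distrib, Finset.sum_sub_distrib, ← Finset.mul_sum]
  rw [hA σ, hB σ, hC σ]
  ring
end

section
/- Let f_{ij}(⃗w) = f̂_{ij}(⃗w) + |⃗w| f̌_{ij}(⃗w), where f̂ and f̌ are smooth symmetric-matrix-valued functions on ℝⁿ, and suppose ∑_j f_{ij}(⃗w) w^j = 0 for all ⃗w. Then all Taylor coefficients of f̂ and f̌ at the origin, symmetrized over one tensor index together with all derivative indices, vanish: writing f̂_{ij}(⃗w) = ∑_{ℓ≤m} f̂_{ij k₁…k_ℓ} w^{k₁}⋯w^{k_ℓ} + o(|⃗w|^m), one has f̂_{i(j k₁…k_ℓ)} = 0 and f̌_{i(j k₁…k_ℓ)} = 0 for all ℓ. -/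
open Finset Asymptotics

/-- Euclidean radius `r = |⃗w|`. -/
noncomputable def rad {n : ℕ} (v : Fin n → ℝ) : ℝ := Real.sqrt (∑ i, v i ^ 2)

/-- Iterated partial derivative `∂_{ι 0} ⋯ ∂_{ι (ℓ-1)} f`. -/
noncomputable def pdIter {n : ℕ} : (ℓ : ℕ) → (Fin ℓ → Fin n) → ((Fin n → ℝ) → ℝ) → ((Fin n → ℝ) → ℝ)
  | 0, _, f => f
  | (ℓ+1), ι, f => fun x => fderiv ℝ (pdIter ℓ (fun m => ι m.succ) f) x (Pi.single (ι 0) 1)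

/-! ### Auxiliary combinatorial lemmas (polarization) -/

lemma aux_incl_excl {m : ℕ} (g : Fin m → Fin m) :
    ∑ S : Finset (Fin m), (-1:ℝ)^(m - S.card) * (if ∀ k, g k ∈ S then 1 else 0)
      = if Function.Bijective g then 1 else 0 := by
  classical
  set R : Finset (Fin m) := Finset.image g univ with hR
  have hcond : ∀ S : Finset (Fin m), (∀ k, g k ∈ S) ↔ R ⊆ S := by
    intro S
    constructor
    · intro h y hy
      simp only [hR, mem_image, mem_univ, true_and] at hy
      obtain ⟨k, rfl⟩ := hy; exact h k
    · intro h k; exact h (by simp [hR])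
  have e : ∑ S : Finset (Fin m), (-1:ℝ)^(m - S.card) * (if ∀ k, g k ∈ S then 1 else 0)
      = ∑ S : Finset (Fin m), (-1:ℝ)^(m - Sᶜ.card) * (if R ⊆ Sᶜ then 1 else 0) :=
    Fintype.sum_equiv ⟨compl, compl, compl_compl, compl_compl⟩ _ _
      (fun S => by simp only [Equiv.coe_fn_mk, compl_compl, hcond])
  rw [e]
  have hcard : ∀ S : Finset (Fin m), m - Sᶜ.card = S.card := by
    intro S
    rw [Finset.card_compl, Fintype.card_fin]
    have : S.card ≤ m := by simpa using Finset.card_le_univ S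
    omega
  have e2 : ∀ S : Finset (Fin m), (-1:ℝ)^(m - Sᶜ.card) * (if R ⊆ Sᶜ then 1 else 0)
      = if S ∈ Rᶜ.powerset then (-1:ℝ)^S.card else 0 := by
    intro S
    rw [hcard S]
    by_cases h : R ⊆ Sᶜ
    · simp [h, Finset.mem_powerset, Finset.subset_compl_comm.mpr h]
    · have : ¬ S ⊆ Rᶜ := fun hc => h (Finset.subset_compl_comm.mp hc)
      simp [h, this]
  simp only [e2]
  rw [Finset.sum_ite_mem, Finset.univ_inter]
  have hcast : (∑ T ∈ Rᶜ.powerset, (-1:ℝ)^T.card)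
      = ((∑ T ∈ Rᶜ.powerset, (-1:ℤ)^T.card : ℤ) : ℝ) := by push_cast; rfl
  rw [hcast, Finset.sum_powerset_neg_one_pow_card]
  have hsurj : (Rᶜ = ∅) ↔ Function.Bijective g := by
    rw [← Finite.surjective_iff_bijective]
    rw [Finset.compl_eq_empty_iff, Finset.eq_univ_iff_forall]
    constructor
    · intro h y; obtain ⟨k, _, hk⟩ := Finset.mem_image.mp (h y); exact ⟨k, hk⟩
    · intro h y; obtain ⟨k, hk⟩ := h y
      exact Finset.mem_image.mpr ⟨k, Finset.mem_univ k, hk⟩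
  by_cases h : Function.Bijective g <;> simp [hsurj, h]

lemma aux_pol {n m : ℕ} (T : (Fin m → Fin n) → ℝ) (a : Fin m → Fin n)
    (h : ∀ u : Fin n → ℝ, ∑ b : Fin m → Fin n, (∏ k, u (b k)) * T b = 0) :
    ∑ σ : Equiv.Perm (Fin m), T (a ∘ σ) = 0 := by
  classical
  have step1 : ∀ S : Finset (Fin m),
      ∑ g ∈ Fintype.piFinset (fun _ : Fin m => S), T (a ∘ g) = 0 := by
    intro S
    have h0 := h (∑ k ∈ S, Pi.single (a k) (1:ℝ))
    have expand : ∀ b : Fin m → Fin n,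
        (∏ k', (∑ k ∈ S, Pi.single (a k) (1:ℝ) : Fin n → ℝ) (b k'))
          = ∑ g ∈ Fintype.piFinset (fun _ : Fin m => S),
              ∏ k', (if b k' = a (g k') then (1:ℝ) else 0) := by
      intro b
      have hv : ∀ k', (∑ k ∈ S, Pi.single (a k) (1:ℝ) : Fin n → ℝ) (b k')
          = ∑ k ∈ S, (if b k' = a k then (1:ℝ) else 0) := by
        intro k'
        rw [Finset.sum_apply]
        exact Finset.sum_congr rfl fun k _ => by rw [Pi.single_apply]
      simp_rw [hv]
      exact Finset.prod_univ_sum _ _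
    simp_rw [expand, Finset.sum_mul] at h0
    rw [Finset.sum_comm] at h0
    have inner : ∀ g ∈ Fintype.piFinset (fun _ : Fin m => S),
        (∑ b : Fin m → Fin n, (∏ k', if b k' = a (g k') then (1:ℝ) else 0) * T b)
          = T (a ∘ g) := by
      intro g _
      have hb : ∀ b : Fin m → Fin n,
          (∏ k', if b k' = a (g k') then (1:ℝ) else 0)
            = if b = a ∘ g then 1 else 0 := by
        intro b
        rw [Finset.prod_boole]
        congr 1
        simp only [eq_iff_iff]
        constructor
        · intro hh; funext k'; exact hh k' (Finset.mem_univ k')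
        · rintro rfl k' _; rfl
      simp_rw [hb, ite_mul, one_mul, zero_mul]
      simp
    rw [Finset.sum_congr rfl inner] at h0
    exact h0
  have swap : ∀ S : Finset (Fin m),
      (∑ g ∈ Fintype.piFinset (fun _ : Fin m => S), T (a ∘ g))
        = ∑ g : Fin m → Fin m, (if ∀ k, g k ∈ S then T (a ∘ g) else 0) := by
    intro S
    have : ∑ g : Fin m → Fin m, (if ∀ k, g k ∈ S then T (a ∘ g) else 0)
        = ∑ g ∈ univ ∩ Fintype.piFinset (fun _ : Fin m => S), T (a ∘ g) := by
      rw [← Finset.sum_ite_mem]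
      exact Finset.sum_congr rfl fun g _ => by simp [Fintype.mem_piFinset]
    rw [this, Finset.univ_inter]
  have main : ∑ S : Finset (Fin m),
      (-1:ℝ)^(m - S.card) * (∑ g : Fin m → Fin m, (if ∀ k, g k ∈ S then T (a ∘ g) else 0))
        = 0 := by
    simp only [← swap, step1, mul_zero, Finset.sum_const_zero]
  simp_rw [Finset.mul_sum] at main
  rw [Finset.sum_comm] at main
  have inner2 : ∀ g : Fin m → Fin m,
      (∑ S : Finset (Fin m), (-1:ℝ)^(m - S.card) * (if ∀ k, g k ∈ S then T (a ∘ g) else 0))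
        = (if Function.Bijective g then 1 else 0) * T (a ∘ g) := by
    intro g
    rw [← aux_incl_excl g, Finset.sum_mul]
    exact Finset.sum_congr rfl fun S _ => by by_cases hS : ∀ k, g k ∈ S <;> simp [hS]
  rw [Finset.sum_congr rfl (fun g _ => inner2 g)] at main
  simp_rw [ite_mul, one_mul, zero_mul] at main
  rw [← main]
  let e : Equiv.Perm (Fin m) ≃ {g : Fin m → Fin m // Function.Bijective g} :=
    { toFun := fun σ => ⟨σ, σ.bijective⟩
      invFun := fun g => Equiv.ofBijective g.1 g.2
      left_inv := fun σ => Equiv.ext fun x => rfl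
      right_inv := fun g => rfl }
  rw [Finset.sum_ite, Finset.sum_const_zero, add_zero]
  have hsub : (∑ g ∈ univ.filter Function.Bijective, T (a ∘ g))
      = ∑ g : {g : Fin m → Fin m // Function.Bijective g}, T (a ∘ g.1) :=
    Finset.sum_subtype _ (fun g => by simp) _
  exact (Fintype.sum_equiv e (fun σ => T (a ∘ σ)) (fun g => T (a ∘ g.1))
    (fun σ => rfl)).trans hsub.symm

/-! ### Auxiliary calculus lemmas -/

lemma aux_infty_succ : (⊤:ℕ∞) + 1 ≤ ((⊤:ℕ∞) : WithTop ℕ∞) := by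
  norm_num

lemma aux_nat_lt_infty (k : ℕ) : (k : WithTop ℕ∞) < ((⊤:ℕ∞) : WithTop ℕ∞) := by
  exact_mod_cast (WithTop.coe_lt_top k)

lemma aux_nat_le_infty (k : ℕ) : (k : WithTop ℕ∞) ≤ ((⊤:ℕ∞) : WithTop ℕ∞) :=
  (aux_nat_lt_infty k).le

lemma pdIter_contDiff {n : ℕ} : ∀ (ℓ : ℕ) (ι : Fin ℓ → Fin n) (f : (Fin n → ℝ) → ℝ),
    ContDiff ℝ (⊤:ℕ∞) f → ContDiff ℝ (⊤:ℕ∞) (pdIter ℓ ι f)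
  | 0, _, _, hf => hf
  | (ℓ+1), ι, f, hf => by
    have h1 := pdIter_contDiff ℓ (fun m => ι m.succ) f hf
    exact (h1.fderiv_right aux_infty_succ).clm_apply contDiff_const

lemma aux_clm_apply_pi {n : ℕ} (φ : (Fin n → ℝ) →L[ℝ] ℝ) (u : Fin n → ℝ) :
    φ u = ∑ j, u j * φ (Pi.single j 1) := by
  have : u = ∑ j, u j • (Pi.single j 1 : Fin n → ℝ) := by
    funext k
    rw [Finset.sum_apply]
    simp [Pi.single_apply, eq_comm]
  conv_lhs => rw [this]
  rw [map_sum]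
  exact Finset.sum_congr rfl fun j _ => by rw [map_smul]; rfl

lemma aux_hasDerivAt_line {n : ℕ} (G : (Fin n → ℝ) → ℝ) (hG : ContDiff ℝ (⊤:ℕ∞) G)
    (u : Fin n → ℝ) (t : ℝ) :
    HasDerivAt (fun s => G (s • u))
      (∑ j, u j * fderiv ℝ G (t • u) (Pi.single j 1)) t := by
  have hline : HasDerivAt (fun s : ℝ => s • u) u t := by
    simpa using (hasDerivAt_id t).smul_const u
  have hGd : HasFDerivAt G (fderiv ℝ G (t • u)) (t • u) :=
    (hG.differentiable (by norm_num)).differentiableAt.hasFDerivAt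
  have := hGd.comp_hasDerivAt t hline
  rwa [aux_clm_apply_pi (fderiv ℝ G (t • u)) u] at this

lemma aux_iter_line {n : ℕ} (G : (Fin n → ℝ) → ℝ) (hG : ContDiff ℝ (⊤:ℕ∞) G)
    (u : Fin n → ℝ) :
    ∀ (ℓ : ℕ) (t : ℝ), iteratedDeriv ℓ (fun s => G (s • u)) t
      = ∑ κ : Fin ℓ → Fin n, (∏ k, u (κ k)) * pdIter ℓ κ G (t • u) := by
  intro ℓ
  induction ℓ with
  | zero =>
    intro t
    simp only [iteratedDeriv_zero]
    rw [Fintype.sum_unique]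
    simp [pdIter]
  | succ ℓ ih =>
    intro t
    rw [iteratedDeriv_succ, funext ih]
    have hterm : ∀ κ : Fin ℓ → Fin n, HasDerivAt
        (fun s => (∏ k, u (κ k)) * pdIter ℓ κ G (s • u))
        ((∏ k, u (κ k)) * ∑ j, u j * pdIter (ℓ+1) (Fin.cons j κ) G (t • u)) t := by
      intro κ
      have hsm := pdIter_contDiff ℓ κ G hG
      have h1 := aux_hasDerivAt_line (pdIter ℓ κ G) hsm u t
      have : (∑ j, u j * fderiv ℝ (pdIter ℓ κ G) (t • u) (Pi.single j 1))
          = ∑ j, u j * pdIter (ℓ+1) (Fin.cons j κ) G (t • u) := by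
        refine Finset.sum_congr rfl fun j _ => ?_
        have e1 : (fun m : Fin ℓ => (Fin.cons j κ : Fin (ℓ+1) → Fin n) m.succ) = κ := by
          funext m; simp
        show u j * fderiv ℝ (pdIter ℓ κ G) (t • u) (Pi.single j 1)
          = u j * fderiv ℝ (pdIter ℓ (fun m => (Fin.cons j κ : Fin (ℓ+1) → Fin n) m.succ) G)
              (t • u) (Pi.single ((Fin.cons j κ : Fin (ℓ+1) → Fin n) 0) 1)
        rw [e1, Fin.cons_zero]
      rw [← this]
      exact h1.const_mul _
    have hsum := HasDerivAt.fun_sum (fun κ (_ : κ ∈ (univ : Finset (Fin ℓ → Fin n))) => hterm κ)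
    rw [hsum.deriv]
    simp_rw [Finset.mul_sum]
    rw [Finset.sum_comm, ← Fintype.sum_prod_type']
    refine Fintype.sum_equiv (Fin.consEquiv (fun _ => Fin n)) _ _ fun p => ?_
    obtain ⟨j, κ⟩ := p
    have ec : (Fin.consEquiv fun _ => Fin n) (j, κ) = Fin.cons j κ := rfl
    rw [ec, Fin.prod_univ_succ]
    simp only [Fin.cons_zero, Fin.cons_succ]
    ring

lemma pdIter_sum {n : ℕ} (F : Fin n → (Fin n → ℝ) → ℝ) (c : Fin n → ℝ)
    (hF : ∀ j, ContDiff ℝ (⊤:ℕ∞) (F j)) :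
    ∀ (ℓ : ℕ) (κ : Fin ℓ → Fin n) (x : Fin n → ℝ),
      pdIter ℓ κ (fun v => ∑ j, c j * F j v) x = ∑ j, c j * pdIter ℓ κ (F j) x := by
  intro ℓ
  induction ℓ with
  | zero => intro κ x; rfl
  | succ ℓ ih =>
    intro κ x
    have hEq : pdIter ℓ (fun m => κ m.succ) (fun v => ∑ j, c j * F j v)
        = fun y => ∑ j, c j * pdIter ℓ (fun m => κ m.succ) (F j) y := funext (ih _)
    show fderiv ℝ (pdIter ℓ (fun m => κ m.succ) (fun v => ∑ j, c j * F j v)) x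
        (Pi.single (κ 0) 1) = _
    rw [hEq]
    have hterm : ∀ j ∈ univ, HasFDerivAt
        (fun y => c j * pdIter ℓ (fun m => κ m.succ) (F j) y)
        (c j • fderiv ℝ (pdIter ℓ (fun m => κ m.succ) (F j)) x) x := fun j _ =>
      (((pdIter_contDiff ℓ _ (F j) (hF j)).differentiable
        (by norm_num)).differentiableAt.hasFDerivAt).const_mul (c j)
    rw [(HasFDerivAt.fun_sum hterm).fderiv]
    simp only [ContinuousLinearMap.sum_apply, ContinuousLinearMap.smul_apply, smul_eq_mul]
    rfl

lemma aux_deriv_zero_on_Ioi (g : ℝ → ℝ) (h : ∀ x > (0:ℝ), g x = 0) :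
    ∀ x > (0:ℝ), deriv g x = 0 := by
  intro x hx
  have hev : g =ᶠ[nhds x] (fun _ => 0) :=
    Filter.eventually_of_mem (isOpen_Ioi.mem_nhds hx) (fun y hy => h y hy)
  rw [hev.deriv_eq]; simp

lemma aux_iterated_zero_on_Ioi (f : ℝ → ℝ) (h : ∀ x > (0:ℝ), f x = 0) :
    ∀ (k : ℕ), ∀ x > (0:ℝ), iteratedDeriv k f x = 0 := by
  intro k
  induction k with
  | zero => simpa using h
  | succ k ih =>
    intro x hx
    rw [iteratedDeriv_succ]
    exact aux_deriv_zero_on_Ioi _ ih x hx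

lemma aux_zero_at_zero (g : ℝ → ℝ) (hg : Continuous g) (h : ∀ x > (0:ℝ), g x = 0) : g 0 = 0 := by
  have h1 : Filter.Tendsto g (nhdsWithin 0 (Set.Ioi 0)) (nhds (g 0)) :=
    hg.continuousAt.continuousWithinAt
  have hev : g =ᶠ[nhdsWithin 0 (Set.Ioi 0)] (fun _ => 0) :=
    Filter.eventuallyEq_of_mem self_mem_nhdsWithin (fun y hy => h y hy)
  have h2 : Filter.Tendsto g (nhdsWithin 0 (Set.Ioi 0)) (nhds 0) :=
    Filter.Tendsto.congr' hev.symm tendsto_const_nhds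
  exact tendsto_nhds_unique h1 h2

lemma aux_half_vanish (f : ℝ → ℝ) (hf : ContDiff ℝ (⊤:ℕ∞) f) (h : ∀ x > (0:ℝ), f x = 0) :
    ∀ k, iteratedDeriv k f 0 = 0 := fun k =>
  aux_zero_at_zero _ (hf.continuous_iteratedDeriv k (aux_nat_le_infty k))
    (aux_iterated_zero_on_Ioi f h k)

lemma aux_iteratedDeriv_comb (A B : ℝ → ℝ) (hA : ContDiff ℝ (⊤:ℕ∞) A)
    (hB : ContDiff ℝ (⊤:ℕ∞) B) (p q : ℝ) : ∀ (k : ℕ) (x : ℝ),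
    iteratedDeriv k (fun t => p * A t + q * B t) x
      = p * iteratedDeriv k A x + q * iteratedDeriv k B x := by
  intro k
  induction k with
  | zero => intro x; simp
  | succ k ih =>
    intro x
    rw [iteratedDeriv_succ, funext ih, iteratedDeriv_succ, iteratedDeriv_succ]
    have hA' : DifferentiableAt ℝ (iteratedDeriv k A) x :=
      (hA.differentiable_iteratedDeriv k (aux_nat_lt_infty k)).differentiableAt
    have hB' : DifferentiableAt ℝ (iteratedDeriv k B) x :=
      (hB.differentiable_iteratedDeriv k (aux_nat_lt_infty k)).differentiableAt
    exact ((hA'.hasDerivAt.const_mul p).add (hB'.hasDerivAt.const_mul q)).deriv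

lemma aux_iteratedDeriv_id_mul (g : ℝ → ℝ) (hg : ContDiff ℝ (⊤:ℕ∞) g) :
    ∀ (k : ℕ) (x : ℝ), iteratedDeriv (k+1) (fun t => t * g t) x
      = x * iteratedDeriv (k+1) g x + (k+1) * iteratedDeriv k g x := by
  intro k
  induction k with
  | zero =>
    intro x
    have hgd : DifferentiableAt ℝ g x := (hg.differentiable (by norm_num)).differentiableAt
    have h1 := ((hasDerivAt_id x).fun_mul hgd.hasDerivAt).deriv
    simp only [id_eq] at h1
    rw [iteratedDeriv_one, h1]
    simp [iteratedDeriv_one]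
    ring
  | succ k ih =>
    intro x
    rw [iteratedDeriv_succ (n := k+1), funext ih]
    have h1 : DifferentiableAt ℝ (iteratedDeriv (k+1) g) x :=
      (hg.differentiable_iteratedDeriv (k+1) (aux_nat_lt_infty (k+1))).differentiableAt
    have h2 : DifferentiableAt ℝ (iteratedDeriv k g) x :=
      (hg.differentiable_iteratedDeriv k (aux_nat_lt_infty k)).differentiableAt
    have h3 := (((hasDerivAt_id x).fun_mul h1.hasDerivAt).fun_add
      (h2.hasDerivAt.const_mul ((k:ℝ)+1))).deriv
    simp only [id_eq] at h3
    rw [h3, iteratedDeriv_succ (n := k+1), iteratedDeriv_succ (n := k)]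
    push_cast
    ring

/-! ### rad lemmas -/

lemma aux_rad_smul_nonneg {n : ℕ} (u : Fin n → ℝ) {t : ℝ} (ht : 0 ≤ t) :
    rad (t • u) = t * rad u := by
  unfold rad
  have e : ∑ i, (t • u) i ^ 2 = t^2 * ∑ i, u i ^ 2 := by
    rw [Finset.mul_sum]
    exact Finset.sum_congr rfl fun i _ => by simp [mul_pow]
  rw [e, Real.sqrt_mul (sq_nonneg t), Real.sqrt_sq ht]

lemma aux_rad_neg {n : ℕ} (u : Fin n → ℝ) : rad (-u) = rad u := by
  unfold rad
  congr 1
  exact Finset.sum_congr rfl fun i _ => by simp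

lemma aux_rad_ne_zero {n : ℕ} {u : Fin n → ℝ} (hu : u ≠ 0) : rad u ≠ 0 := by
  obtain ⟨i, hi⟩ : ∃ i, u i ≠ 0 := Function.ne_iff.mp hu
  have hpos : 0 < ∑ j, u j ^ 2 := by
    have h1 : 0 < u i ^ 2 := by positivity
    have h2 : u i ^ 2 ≤ ∑ j, u j ^ 2 :=
      Finset.single_le_sum (fun j _ => sq_nonneg (u j)) (Finset.mem_univ i)
    linarith
  exact ne_of_gt (Real.sqrt_pos.mpr hpos)

/-! ### half-line vanishing of the gauge function -/

lemma aux_van {n : ℕ} (fh fc : (Fin n → ℝ) → Fin n → Fin n → ℝ)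
    (hfh : ∀ i j, ContDiff ℝ (⊤:ℕ∞) (fun v => fh v i j))
    (hfc : ∀ i j, ContDiff ℝ (⊤:ℕ∞) (fun v => fc v i j))
    (hgauge : ∀ v : Fin n → ℝ, ∀ i, ∑ j, (fh v i j + rad v * fc v i j) * v j = 0)
    (i : Fin n) (u : Fin n → ℝ) :
    ∀ k, iteratedDeriv k (fun t : ℝ => (∑ j, u j * fh (t • u) i j)
        + t * rad u * (∑ j, u j * fc (t • u) i j)) 0 = 0 := by
  have hline : ContDiff ℝ (⊤:ℕ∞) (fun t : ℝ => t • u) := contDiff_id.smul contDiff_const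
  have hΦ : ContDiff ℝ (⊤:ℕ∞) (fun t : ℝ => ∑ j, u j * fh (t • u) i j) :=
    ContDiff.sum fun j _ => contDiff_const.mul ((hfh i j).comp hline)
  have hΨ : ContDiff ℝ (⊤:ℕ∞) (fun t : ℝ => ∑ j, u j * fc (t • u) i j) :=
    ContDiff.sum fun j _ => contDiff_const.mul ((hfc i j).comp hline)
  apply aux_half_vanish
  · exact hΦ.add ((contDiff_id.mul contDiff_const).mul hΨ)
  · intro t ht
    have h0 := hgauge (t • u) i
    rw [aux_rad_smul_nonneg u ht.le] at h0
    have e1 : ∀ j ∈ (univ : Finset (Fin n)),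
        (fh (t • u) i j + t * rad u * fc (t • u) i j) * ((t • u) j)
          = t * (u j * fh (t • u) i j) + (t * (t * rad u)) * (u j * fc (t • u) i j) := by
      intro j _
      simp only [Pi.smul_apply, smul_eq_mul]
      ring
    rw [Finset.sum_congr rfl e1, Finset.sum_add_distrib,
      ← Finset.mul_sum, ← Finset.mul_sum] at h0
    have h2 : t * ((∑ j, u j * fh (t • u) i j)
        + t * rad u * (∑ j, u j * fc (t • u) i j)) = 0 := by
      rw [← h0]; ring
    rcases mul_eq_zero.mp h2 with h | h
    · exact absurd h (ne_of_gt ht)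
    · exact h

/-! ### the diagonal sum as an iterated derivative along a line -/

lemma aux_q_sum {n : ℕ} (f : (Fin n → ℝ) → Fin n → ℝ)
    (hf : ∀ j, ContDiff ℝ (⊤:ℕ∞) (fun v => f v j))
    (u : Fin n → ℝ) (ℓ : ℕ) :
    ∑ b : Fin (ℓ+1) → Fin n,
        (∏ k, u (b k)) * pdIter ℓ (fun m => b m.succ) (fun v => f v (b 0)) 0
      = iteratedDeriv ℓ (fun t : ℝ => ∑ j, u j * f (t • u) j) 0 := by
  have hG : ContDiff ℝ (⊤:ℕ∞) (fun v => ∑ j, u j * f v j) :=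
    ContDiff.sum fun j _ => contDiff_const.mul (hf j)
  have hil : iteratedDeriv ℓ (fun t : ℝ => ∑ j, u j * f (t • u) j) 0
      = ∑ κ : Fin ℓ → Fin n,
          (∏ k, u (κ k)) * pdIter ℓ κ (fun v => ∑ j, u j * f v j) ((0:ℝ) • u) :=
    aux_iter_line (fun v => ∑ j, u j * f v j) hG u ℓ 0
  rw [hil, zero_smul]
  have e1 : ∀ κ : Fin ℓ → Fin n, pdIter ℓ κ (fun v => ∑ j, u j * f v j) 0
      = ∑ j, u j * pdIter ℓ κ (fun v => f v j) 0 :=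
    fun κ => pdIter_sum (fun j => fun v => f v j) u hf ℓ κ 0
  simp_rw [e1, Finset.mul_sum]
  rw [Finset.sum_comm, ← Fintype.sum_prod_type']
  refine (Fintype.sum_equiv (Fin.consEquiv (fun _ => Fin n)) _ _ fun p => ?_).symm
  obtain ⟨j, κ⟩ := p
  have ec : (Fin.consEquiv fun _ => Fin n) (j, κ) = Fin.cons j κ := rfl
  rw [ec]
  have ecs : (fun m : Fin ℓ => (Fin.cons j κ : Fin (ℓ+1) → Fin n) m.succ) = κ := by
    funext m; simp
  show (∏ k, u (κ k)) * (u j * pdIter ℓ κ (fun v => f v j) 0)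
    = (∏ k, u ((Fin.cons j κ : Fin (ℓ+1) → Fin n) k))
      * pdIter ℓ (fun m => (Fin.cons j κ : Fin (ℓ+1) → Fin n) m.succ)
          (fun v => f v ((Fin.cons j κ : Fin (ℓ+1) → Fin n) 0)) 0
  rw [ecs, Fin.cons_zero, Fin.prod_univ_succ]
  simp only [Fin.cons_zero, Fin.cons_succ]
  ring

/-- If `f_{ij} = f̂_{ij} + r f̌_{ij}` with `f̂, f̌` smooth symmetric matrix fields and
`∑ j, f_{ij} w^j = 0`, then the Taylor coefficients of `f̂` and `f̌` at `0`, symmetrized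
over one tensor index together with all derivative indices, vanish:
`f̂_{i(j k₁…k_ℓ)} = 0 = f̌_{i(j k₁…k_ℓ)}`. -/
theorem stmt12 (n : ℕ) (fh fc : (Fin n → ℝ) → Fin n → Fin n → ℝ)
    (hfh : ∀ i j, ContDiff ℝ (⊤ : ℕ∞) (fun v => fh v i j))
    (hfc : ∀ i j, ContDiff ℝ (⊤ : ℕ∞) (fun v => fc v i j))
    (hsymh : ∀ v i j, fh v i j = fh v j i)
    (hsymc : ∀ v i j, fc v i j = fc v j i)
    (hgauge : ∀ v : Fin n → ℝ, ∀ i, ∑ j, (fh v i j + rad v * fc v i j) * v j = 0) :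
    ∀ (ℓ : ℕ) (i : Fin n) (a : Fin (ℓ+1) → Fin n),
      (∑ σ : Equiv.Perm (Fin (ℓ+1)),
          pdIter ℓ (fun m => a (σ m.succ)) (fun v => fh v i (a (σ 0))) 0 = 0) ∧
      (∑ σ : Equiv.Perm (Fin (ℓ+1)),
          pdIter ℓ (fun m => a (σ m.succ)) (fun v => fc v i (a (σ 0))) 0 = 0) := by
  have hfh' : ∀ i j, ContDiff ℝ (⊤:ℕ∞) (fun v => fh v i j) := fun i j => (hfh i j).of_le (by simp)
  have hfc' : ∀ i j, ContDiff ℝ (⊤:ℕ∞) (fun v => fc v i j) := fun i j => (hfc i j).of_le (by simp)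
  intro ℓ i a
  have key : ∀ u : Fin n → ℝ,
      ((∑ b : Fin (ℓ+1) → Fin n, (∏ k, u (b k)) *
          pdIter ℓ (fun m => b m.succ) (fun v => fh v i (b 0)) 0) = 0)
    ∧ ((∑ b : Fin (ℓ+1) → Fin n, (∏ k, u (b k)) *
          pdIter ℓ (fun m => b m.succ) (fun v => fc v i (b 0)) 0) = 0) := by
    intro u
    by_cases hu : u = 0
    · subst hu
      constructor <;>
      · refine Finset.sum_eq_zero fun b _ => ?_
        have hz : (∏ k, (0 : Fin n → ℝ) (b k)) = 0 := by
          simp [Finset.prod_const]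
        rw [hz, zero_mul]
    · have hcne : rad u ≠ 0 := aux_rad_ne_zero hu
      have hline : ContDiff ℝ (⊤:ℕ∞) (fun t : ℝ => t • u) := contDiff_id.smul contDiff_const
      have hΦ : ContDiff ℝ (⊤:ℕ∞) (fun t : ℝ => ∑ j, u j * fh (t • u) i j) :=
        ContDiff.sum fun j _ => contDiff_const.mul ((hfh' i j).comp hline)
      have hΨ : ContDiff ℝ (⊤:ℕ∞) (fun t : ℝ => ∑ j, u j * fc (t • u) i j) :=
        ContDiff.sum fun j _ => contDiff_const.mul ((hfc' i j).comp hline)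
      have hSsm : ContDiff ℝ (⊤:ℕ∞) (fun t : ℝ => (∑ j, u j * fh (t • u) i j)
          + t * rad u * (∑ j, u j * fc (t • u) i j)) :=
        hΦ.add ((contDiff_id.mul contDiff_const).mul hΨ)
      have hDsm : ContDiff ℝ (⊤:ℕ∞) (fun t : ℝ => (∑ j, u j * fh (t • u) i j)
          - t * rad u * (∑ j, u j * fc (t • u) i j)) :=
        hΦ.sub ((contDiff_id.mul contDiff_const).mul hΨ)
      have hS := aux_van fh fc hfh' hfc' hgauge i u
      have hPneg := aux_van fh fc hfh' hfc' hgauge i (-u)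
      have hfun : (fun t : ℝ => (∑ j, (-u) j * fh (t • (-u)) i j)
          + t * rad (-u) * (∑ j, (-u) j * fc (t • (-u)) i j))
          = (fun t : ℝ => -((∑ j, u j * fh ((-t) • u) i j)
              - (-t) * rad u * (∑ j, u j * fc ((-t) • u) i j))) := by
        funext t
        rw [aux_rad_neg]
        have e : t • (-u) = (-t) • u := by rw [smul_neg, neg_smul]
        rw [e]
        simp only [Pi.neg_apply, neg_mul, Finset.sum_neg_distrib]
        ring
      have hD : ∀ k, iteratedDeriv k (fun s : ℝ => (∑ j, u j * fh (s • u) i j)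
          - s * rad u * (∑ j, u j * fc (s • u) i j)) 0 = 0 := by
        intro k
        have h1 := hPneg k
        rw [hfun, iteratedDeriv_fun_neg] at h1
        have h2 : iteratedDeriv k (fun t : ℝ => (∑ j, u j * fh ((-t) • u) i j)
            - (-t) * rad u * (∑ j, u j * fc ((-t) • u) i j)) 0 = 0 := neg_eq_zero.mp h1
        have h3 := iteratedDeriv_comp_neg k (fun s : ℝ => (∑ j, u j * fh (s • u) i j)
            - s * rad u * (∑ j, u j * fc (s • u) i j)) 0
        rw [h3, neg_zero, smul_eq_mul] at h2
        rcases mul_eq_zero.mp h2 with h | h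
        · exact absurd h (pow_ne_zero k (by norm_num))
        · exact h
      have hΦ0 : iteratedDeriv ℓ (fun t : ℝ => ∑ j, u j * fh (t • u) i j) 0 = 0 := by
        have e : (fun t : ℝ => ∑ j, u j * fh (t • u) i j)
            = fun t : ℝ => (1/2) * ((∑ j, u j * fh (t • u) i j)
                + t * rad u * (∑ j, u j * fc (t • u) i j))
              + (1/2) * ((∑ j, u j * fh (t • u) i j)
                - t * rad u * (∑ j, u j * fc (t • u) i j)) := by
          funext t; ring
        rw [e, aux_iteratedDeriv_comb _ _ hSsm hDsm (1/2) (1/2) ℓ 0, hS ℓ, hD ℓ]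
        ring
      have hΨ0 : iteratedDeriv ℓ (fun t : ℝ => ∑ j, u j * fc (t • u) i j) 0 = 0 := by
        have hTΨ : iteratedDeriv (ℓ+1)
            (fun t : ℝ => t * (rad u * (∑ j, u j * fc (t • u) i j))) 0 = 0 := by
          have e : (fun t : ℝ => t * (rad u * (∑ j, u j * fc (t • u) i j)))
              = fun t : ℝ => (1/2) * ((∑ j, u j * fh (t • u) i j)
                  + t * rad u * (∑ j, u j * fc (t • u) i j))
                + (-(1/2)) * ((∑ j, u j * fh (t • u) i j)
                  - t * rad u * (∑ j, u j * fc (t • u) i j)) := by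
            funext t; ring
          rw [e, aux_iteratedDeriv_comb _ _ hSsm hDsm (1/2) (-(1/2)) (ℓ+1) 0,
            hS (ℓ+1), hD (ℓ+1)]
          ring
        have hg : ContDiff ℝ (⊤:ℕ∞) (fun t : ℝ => rad u * (∑ j, u j * fc (t • u) i j)) :=
          contDiff_const.mul hΨ
        have h4 := aux_iteratedDeriv_id_mul _ hg ℓ 0
        rw [hTΨ, zero_mul, zero_add] at h4
        have h5 : iteratedDeriv ℓ (fun t : ℝ => rad u * (∑ j, u j * fc (t • u) i j)) 0 = 0 := by
          rcases mul_eq_zero.mp h4.symm with h | h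
          · exact absurd h (by positivity)
          · exact h
        have e2 : (fun t : ℝ => rad u * (∑ j, u j * fc (t • u) i j))
            = fun t : ℝ => rad u * (∑ j, u j * fc (t • u) i j)
              + 0 * (∑ j, u j * fc (t • u) i j) := by
          funext t; ring
        rw [e2, aux_iteratedDeriv_comb _ _ hΨ hΨ (rad u) 0 ℓ 0, zero_mul, add_zero] at h5
        rcases mul_eq_zero.mp h5 with h | h
        · exact absurd h hcne
        · exact h
      constructor
      · rw [aux_q_sum (fun v j => fh v i j) (fun j => hfh' i j) u ℓ]
        exact hΦ0
      · rw [aux_q_sum (fun v j => fc v i j) (fun j => hfc' i j) u ℓ]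
        exact hΨ0
  exact ⟨aux_pol _ a (fun u => (key u).1), aux_pol _ a (fun u => (key u).2)⟩
end
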